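/- arXiv:1101.3693 — 4 statements merged into one kernel-verified Lean document; each statement's English description precedes it below -/
import Mathlib

section
/- Let g = u(2) with basis T (central), X, Y, Z where [X,Y] = Z, [Y,Z] = X, [Z,X] = Y. For any real c ≠ 0 and d ∈ ℝ, the endomorphism J_δ defined by J(T - dX) = cX, J(cX) = -(T - dX), JY = Z, JZ = -Y satisfies J² = -id and has vanishing Nijenhuis tensor. -/
/-- The bracket of `u(2) = ℝ·T ⊕ su(2)`: basis `T = e₀` (central), `X = e₁`,
`Y = e₂`, `Z = e₃` with `[X,Y] = Z`, `[Y,Z] = X`, `[Z,X] = Y`. -/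
def u2Br (u v : Fin 4 → ℝ) : Fin 4 → ℝ :=
  ![0,
    u 2 * v 3 - u 3 * v 2,
    u 3 * v 1 - u 1 * v 3,
    u 1 * v 2 - u 2 * v 1]

/-- The endomorphism `J_δ`, `δ = c + √-1 d`, determined by
`J(T - dX) = cX`, `J(cX) = -(T - dX)`, `JY = Z`, `JZ = -Y`. -/
noncomputable def u2J (c d : ℝ) (u : Fin 4 → ℝ) : Fin 4 → ℝ :=
  ![-(d / c) * u 0 - (1 / c) * u 1,
    (c + d ^ 2 / c) * u 0 + (d / c) * u 1,
    -(u 3),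
    u 2]

/-- For any real `c ≠ 0` and `d`, the endomorphism `J_δ` on `u(2)` satisfies
`J² = -id` and has vanishing Nijenhuis tensor
`N(U,V) = [JU,JV] - [U,V] - J[JU,V] - J[U,JV]`. -/
theorem stmt10 (c d : ℝ) (hc : c ≠ 0) :
    (∀ u : Fin 4 → ℝ, u2J c d (u2J c d u) = -u) ∧
    (∀ u v : Fin 4 → ℝ,
      u2Br (u2J c d u) (u2J c d v) - u2Br u v - u2J c d (u2Br (u2J c d u) v) -
          u2J c d (u2Br u (u2J c d v)) = 0) := by
  constructor
  · intro u
    funext i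
    fin_cases i <;>
      simp [u2J] <;> field_simp <;> ring
  · intro u v
    funext i
    fin_cases i <;>
      simp [u2J, u2Br] <;> field_simp <;> ring
end

section
/- Let g be a 4-dimensional unimodular Lie algebra of the form n ⋊ ℝ where n is the 3-dimensional Heisenberg algebra (basis X,Y,Z with [Y,Z] = -X) and n = [g,g]. Then, after a change of basis, the action of the generator W satisfies either (ad_W X = 0, ad_W Y = -Z, ad_W Z = Y) or (ad_W X = 0, ad_W Y = Y, ad_W Z = -Z). -/
/-!
Write `ad_W Y = b₁ X + b₂ Y + b₃ Z` and `ad_W Z = c₁ X + c₂ Y + c₃ Z`. The Jacobi identity for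
`W, Y, Z` gives `ad_W X = (b₂ + c₃) X`, so `tr ad_W = 2 (b₂ + c₃)` and unimodularity makes `ad_W`
kill `X` and act tracelessly on `Y, Z`. Replacing `W` by `W + c₁ Y - b₁ Z` removes the
`X`-components, leaving a traceless block `A = !![b₂, c₂; b₃, c₃]`, which is invertible because
`[g, g] ⊆ span {X, ad_W Y, ad_W Z}` must contain `Y` and `Z`. After rescaling `W` by
`1 / √|det A|`, the block is conjugate to a rotation generator if `det A > 0` and to
`diag (1, -1)` if `det A < 0`; rescaling `X` by the determinant of the change of basis of
`span {Y, Z}` preserves `[Y', Z'] = -X'`.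
-/

open Submodule

lemma Matrix.range_vecCons_four {α : Type*} (a b c d : α) :
    Set.range ![a, b, c, d] = {a, b, c, d} := by
  simp only [Matrix.range_cons, Matrix.range_empty, Set.union_empty, Set.singleton_union]

section LinearAlgebra

variable {R M : Type*} [Ring R] [AddCommGroup M] [Module R M]

lemma LinearIndependent.eq_zero_of_triple {X Y Z : M} (h : LinearIndependent R ![X, Y, Z])
    {a b c : R} (habc : a • X + b • Y + c • Z = 0) : a = 0 ∧ b = 0 ∧ c = 0 := by
  have := Fintype.linearIndependent_iff.mp h ![a, b, c] (by simpa [Fin.sum_univ_three] using habc)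
  exact ⟨this 0, this 1, this 2⟩

lemma span_singleton_add_sup_eq_of_mem {N : Submodule R M} {u : M} (hu : u ∈ N) (w : M) :
    R ∙ (w + u) ⊔ N = R ∙ w ⊔ N := by
  apply le_antisymm <;> refine sup_le ?_ le_sup_right <;> rw [span_singleton_le_iff_mem]
  · exact add_mem (mem_sup_left (mem_span_singleton_self w)) (mem_sup_right hu)
  · simpa using sub_mem (mem_sup_left (mem_span_singleton_self (w + u))) (mem_sup_right hu)

end LinearAlgebra

section Field

variable {K M : Type*} [Field K] [AddCommGroup M] [Module K M]

lemma det_ne_zero_of_mem_span {X Y Z : M} (h : LinearIndependent K ![X, Y, Z])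
    {a₀ a b c₀ c d : K}
    (hY : Y ∈ span K {X, a₀ • X + a • Y + b • Z, c₀ • X + c • Y + d • Z})
    (hZ : Z ∈ span K {X, a₀ • X + a • Y + b • Z, c₀ • X + c • Y + d • Z}) :
    a * d - b * c ≠ 0 := by
  obtain ⟨α, β, γ, hY⟩ := mem_span_triple.mp hY
  obtain ⟨α', β', γ', hZ⟩ := mem_span_triple.mp hZ
  obtain ⟨-, hY₁, hY₂⟩ := h.eq_zero_of_triple (a := α + β * a₀ + γ * c₀)
    (b := β * a + γ * c - 1) (c := β * b + γ * d) (by linear_combination (norm := module) hY)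
  obtain ⟨-, -, hZ₂⟩ := h.eq_zero_of_triple (a := α' + β' * a₀ + γ' * c₀)
    (b := β' * a + γ' * c) (c := β' * b + γ' * d - 1) (by linear_combination (norm := module) hZ)
  intro hdet
  -- `!![β, γ; β', γ']` is a left inverse of `!![a, b; c, d]`
  have : (a * d - b * c) * (β * γ' - γ * β') = 1 := by
    linear_combination (β' * b + γ' * d) * hY₁ + hZ₂ - (β' * a + γ' * c) * hY₂
  simp [hdet] at this

lemma span_pair_eq_of_det_ne_zero {Y Z : M} {p q r s : K} (h : p * s - q * r ≠ 0) :
    span K {p • Y + q • Z, r • Y + s • Z} = span K {Y, Z} := by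
  apply le_antisymm <;> rw [span_le, Set.insert_subset_iff, Set.singleton_subset_iff]
  · exact ⟨mem_span_pair.mpr ⟨p, q, rfl⟩, mem_span_pair.mpr ⟨r, s, rfl⟩⟩
  · exact ⟨(smul_mem_iff _ h).mp (mem_span_pair.mpr ⟨s, -q, by module⟩),
      (smul_mem_iff _ h).mp (mem_span_pair.mpr ⟨-r, p, by module⟩)⟩

lemma span_smul_pair_smul_add_eq {X Y Z W Y' Z' u : M} {k t : K} (hk : k ≠ 0) (ht : t ≠ 0)
    (hYZ : span K {Y', Z'} = span K {Y, Z}) (hu : u ∈ span K {Y, Z}) :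
    span K {k • X, Y', Z', t • (W + u)} = span K {X, Y, Z, W} := by
  have split : ∀ a b c d : M, span K {a, b, c, d} = K ∙ a ⊔ (span K {b, c} ⊔ K ∙ d) := by
    intro a b c d
    simp only [span_insert, sup_assoc]
  rw [split, split, span_singleton_smul_eq (IsUnit.mk0 _ hk), span_singleton_smul_eq
    (IsUnit.mk0 _ ht), hYZ, sup_comm _ (K ∙ (W + u)), span_singleton_add_sup_eq_of_mem hu,
    sup_comm (K ∙ W)]

lemma linearIndependent_of_span_range_eq_top {ι : Type*} [Fintype ι] {v w : ι → M}
    (hv : LinearIndependent K v) (hvs : span K (Set.range v) = ⊤)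
    (hws : span K (Set.range w) = ⊤) : LinearIndependent K w :=
  linearIndependent_of_top_le_span_of_card_eq_finrank hws.ge
    (by rw [← finrank_top, ← hvs, finrank_span_eq_card hv])

lemma trace_eq_of_linearIndependent_four {X Y Z W : M}
    (hli : LinearIndependent K ![X, Y, Z, W]) (hspan : span K {X, Y, Z, W} = ⊤)
    (f : M →ₗ[K] M) {a b₁ b₂ b₃ c₁ c₂ c₃ : K} (hX : f X = a • X)
    (hY : f Y = b₁ • X + b₂ • Y + b₃ • Z) (hZ : f Z = c₁ • X + c₂ • Y + c₃ • Z)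
    (hW : f W = 0) :
    LinearMap.trace K M f = a + b₂ + c₃ := by
  let b := Module.Basis.mk hli (by rw [Matrix.range_vecCons_four, hspan])
  have hb : ∀ i, b i = ![X, Y, Z, W] i := Module.Basis.mk_apply hli _
  have hrepr : ∀ i, b.repr (![X, Y, Z, W] i) = Finsupp.single i 1 := fun i => by
    rw [← hb, b.repr_self]
  have h0 := hrepr 0
  have h1 := hrepr 1
  have h2 := hrepr 2
  simp only [Matrix.cons_val] at h0 h1 h2
  rw [LinearMap.trace_eq_matrix_trace K b, Matrix.trace, Fin.sum_univ_four]
  simp only [Matrix.diag_apply, LinearMap.toMatrix_apply, hb, Matrix.cons_val]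
  simp [hX, hY, hZ, hW, h0, h1, h2]

end Field

section Lie

variable {R L : Type*} [CommRing R] [LieRing L] [LieAlgebra R L]

lemma toSubmodule_lie_top_top_le {s : Set L} (hs : span R s = ⊤) {N : Submodule R L}
    (h : ∀ u ∈ s, ∀ v ∈ s, ⁅u, v⁆ ∈ N) :
    (⁅(⊤ : LieIdeal R L), (⊤ : LieIdeal R L)⁆ : LieIdeal R L).toSubmodule ≤ N := by
  have hmap : map₂ (LieAlgebra.ad R L : L →ₗ[R] Module.End R L) (span R s) (span R s) ≤ N := by
    rw [map₂_span_span, span_le]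
    rintro _ ⟨u, hu, v, hv, rfl⟩
    exact h u hu v hv
  rw [LieSubmodule.lieIdeal_oper_eq_linear_span', span_le]
  rintro _ ⟨u, -, v, -, rfl⟩
  exact hmap (apply_mem_map₂ _ (hs ▸ mem_top) (hs ▸ mem_top))

variable {X Y Z : L}

lemma lie_eq_smul_of_heisenberg (hXY : ⁅X, Y⁆ = 0) (hXZ : ⁅X, Z⁆ = 0) (hYZ : ⁅Y, Z⁆ = -X)
    {W : L} {b₁ b₂ b₃ c₁ c₂ c₃ : R} (hWY : ⁅W, Y⁆ = b₁ • X + b₂ • Y + b₃ • Z)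
    (hWZ : ⁅W, Z⁆ = c₁ • X + c₂ • Y + c₃ • Z) :
    ⁅W, X⁆ = (b₂ + c₃) • X := by
  have jacobi := leibniz_lie W Y Z
  rw [hYZ, hWY, hWZ] at jacobi
  simp only [lie_neg, add_lie, smul_lie, lie_add, lie_smul, lie_self, hXY, hXZ, hYZ,
    ← lie_skew Y X] at jacobi
  linear_combination (norm := module) -jacobi

lemma lie_add_sub_eq_of_heisenberg (hXY : ⁅X, Y⁆ = 0) (hXZ : ⁅X, Z⁆ = 0) (hYZ : ⁅Y, Z⁆ = -X)
    {W : L} {b₁ b₂ b₃ c₁ c₂ c₃ : R} (hWX : ⁅W, X⁆ = 0)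
    (hWY : ⁅W, Y⁆ = b₁ • X + b₂ • Y + b₃ • Z) (hWZ : ⁅W, Z⁆ = c₁ • X + c₂ • Y + c₃ • Z) :
    ⁅W + (c₁ • Y - b₁ • Z), X⁆ = 0 ∧ ⁅W + (c₁ • Y - b₁ • Z), Y⁆ = b₂ • Y + b₃ • Z ∧
      ⁅W + (c₁ • Y - b₁ • Z), Z⁆ = c₂ • Y + c₃ • Z := by
  simp only [add_lie, sub_lie, smul_lie, hWX, hWY, hWZ, lie_self, hXY, hXZ, hYZ,
    ← lie_skew Y X, ← lie_skew Z X, ← lie_skew Z Y]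
  refine ⟨?_, ?_, ?_⟩ <;> module

lemma heisenberg_change_of_basis (hXY : ⁅X, Y⁆ = 0) (hXZ : ⁅X, Z⁆ = 0) (hYZ : ⁅Y, Z⁆ = -X)
    (p q r s : R) :
    ⁅(p * s - q * r) • X, p • Y + q • Z⁆ = 0 ∧ ⁅(p * s - q * r) • X, r • Y + s • Z⁆ = 0 ∧
      ⁅p • Y + q • Z, r • Y + s • Z⁆ = -((p * s - q * r) • X) := by
  simp only [lie_add, add_lie, lie_smul, smul_lie, lie_self, hXY, hXZ, hYZ, ← lie_skew Z Y]
  refine ⟨?_, ?_, ?_⟩ <;> module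

lemma toSubmodule_lie_top_top_le_heisenberg {W : L} (hspan : span R {X, Y, Z, W} = ⊤)
    (hXY : ⁅X, Y⁆ = 0) (hXZ : ⁅X, Z⁆ = 0) (hYZ : ⁅Y, Z⁆ = -X) (hWX : ⁅W, X⁆ = 0) :
    (⁅(⊤ : LieIdeal R L), (⊤ : LieIdeal R L)⁆ : LieIdeal R L).toSubmodule ≤
      span R {X, ⁅W, Y⁆, ⁅W, Z⁆} := by
  have hX : X ∈ span R {X, ⁅W, Y⁆, ⁅W, Z⁆} := subset_span (by simp)
  have hWY : ⁅W, Y⁆ ∈ span R {X, ⁅W, Y⁆, ⁅W, Z⁆} := subset_span (by simp)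
  have hWZ : ⁅W, Z⁆ ∈ span R {X, ⁅W, Y⁆, ⁅W, Z⁆} := subset_span (by simp)
  refine toSubmodule_lie_top_top_le hspan ?_
  intro u hu v hv
  simp only [Set.mem_insert_iff, Set.mem_singleton_iff] at hu hv
  rcases hu with hu | hu | hu | hu <;> rcases hv with hv | hv | hv | hv <;> rw [hu, hv] <;>
    simp only [lie_self, hXY, hXZ, hYZ, hWX, ← lie_skew Y X, ← lie_skew Z X, ← lie_skew X W,
      ← lie_skew Y W, ← lie_skew Z W, ← lie_skew Z Y, neg_zero, neg_neg, neg_mem_iff, zero_mem,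
      hX, hWY, hWZ]

end Lie

lemma det_ne_zero_of_toSubmodule_lie_top_top_eq {K L : Type*} [Field K] [LieRing L]
    [LieAlgebra K L] {X Y Z W : L} (hindep : LinearIndependent K ![X, Y, Z, W])
    (hspan : span K {X, Y, Z, W} = ⊤) (hXY : ⁅X, Y⁆ = 0) (hXZ : ⁅X, Z⁆ = 0)
    (hYZ : ⁅Y, Z⁆ = -X) (hWX : ⁅W, X⁆ = 0) {b₁ b₂ b₃ c₁ c₂ c₃ : K}
    (hWY : ⁅W, Y⁆ = b₁ • X + b₂ • Y + b₃ • Z) (hWZ : ⁅W, Z⁆ = c₁ • X + c₂ • Y + c₃ • Z)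
    (hderived : (⁅(⊤ : LieIdeal K L), (⊤ : LieIdeal K L)⁆ : LieIdeal K L).toSubmodule =
      span K {X, Y, Z}) :
    b₂ * c₃ - b₃ * c₂ ≠ 0 := by
  have hle := hderived ▸ toSubmodule_lie_top_top_le_heisenberg hspan hXY hXZ hYZ hWX
  rw [hWY, hWZ] at hle
  have hXYZ : LinearIndependent K ![X, Y, Z] := by
    convert hindep.comp _ (Fin.castSucc_injective 3) using 1
    ext i
    fin_cases i <;> rfl
  exact det_ne_zero_of_mem_span hXYZ (hle (subset_span (by simp))) (hle (subset_span (by simp)))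

section NormalForm

variable {M : Type*} [AddCommGroup M] [Module ℝ M] (D : Module.End ℝ M) {Y Z : M} {a b c : ℝ}

lemma exists_rotation_basis (hY : D Y = a • Y + b • Z) (hZ : D Z = c • Y - a • Z)
    (h : a ^ 2 + b * c < 0) :
    ∃ p q r s t : ℝ, p * s - q * r ≠ 0 ∧ t ≠ 0 ∧
      t • D (p • Y + q • Z) = -(r • Y + s • Z) ∧ t • D (r • Y + s • Z) = p • Y + q • Z := by
  set μ := √(-(a ^ 2 + b * c))
  have hμ : 0 < μ := Real.sqrt_pos.mpr (by linarith)
  have hμ2 : μ ^ 2 = -(a ^ 2 + b * c) := Real.sq_sqrt (by linarith)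
  have hb : b ≠ 0 := by rintro rfl; nlinarith
  refine ⟨μ, 0, -a, -b, μ⁻¹, by simpa using ⟨hμ.ne', hb⟩, inv_ne_zero hμ.ne', ?_, ?_⟩ <;>
    simp only [map_add, map_smul, hY, hZ]
  · match_scalars <;> field_simp <;> ring
  · match_scalars <;> field_simp
    · linear_combination -hμ2
    · ring

lemma exists_hyperbolic_basis (hY : D Y = a • Y + b • Z) (hZ : D Z = c • Y - a • Z)
    (h : 0 < a ^ 2 + b * c) :
    ∃ p q r s t : ℝ, p * s - q * r ≠ 0 ∧ t ≠ 0 ∧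
      t • D (p • Y + q • Z) = p • Y + q • Z ∧ t • D (r • Y + s • Z) = -(r • Y + s • Z) := by
  rcases eq_or_ne b 0 with rfl | hb
  · have ha : a ≠ 0 := by rintro rfl; simp at h
    refine ⟨1, 0, c, -2 * a, a⁻¹, by simpa using ha, inv_ne_zero ha, ?_, ?_⟩ <;>
      simp only [map_add, map_smul, hY, hZ] <;> match_scalars <;> field_simp <;> ring
  · set τ := √(a ^ 2 + b * c)
    have hτ : 0 < τ := Real.sqrt_pos.mpr h
    have hτ2 : τ ^ 2 = a ^ 2 + b * c := Real.sq_sqrt h.le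
    refine ⟨a + τ, b, a - τ, b, τ⁻¹, ?_, inv_ne_zero hτ.ne', ?_, ?_⟩
    · ring_nf
      simpa using ⟨hτ.ne', hb⟩
    all_goals
      simp only [map_add, map_smul, hY, hZ]
      match_scalars <;> field_simp
      · linear_combination -hτ2
      · ring

lemma exists_normal_basis_of_trace_eq_zero (hY : D Y = a • Y + b • Z) {d : ℝ}
    (hZ : D Z = c • Y + d • Z) (htr : a + d = 0) (hdet : a * d - b * c ≠ 0) :
    ∃ p q r s t : ℝ, p * s - q * r ≠ 0 ∧ t ≠ 0 ∧
      ((t • D (p • Y + q • Z) = -(r • Y + s • Z) ∧ t • D (r • Y + s • Z) = p • Y + q • Z) ∨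
        (t • D (p • Y + q • Z) = p • Y + q • Z ∧ t • D (r • Y + s • Z) = -(r • Y + s • Z))) := by
  obtain rfl : d = -a := by linear_combination htr
  rw [neg_smul, ← sub_eq_add_neg] at hZ
  rcases lt_or_gt_of_ne (show a ^ 2 + b * c ≠ 0 by contrapose! hdet; linear_combination -hdet)
    with h | h
  · obtain ⟨p, q, r, s, t, hps, ht, hY', hZ'⟩ := exists_rotation_basis D hY hZ h
    exact ⟨p, q, r, s, t, hps, ht, .inl ⟨hY', hZ'⟩⟩
  · obtain ⟨p, q, r, s, t, hps, ht, hY', hZ'⟩ := exists_hyperbolic_basis D hY hZ h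
    exact ⟨p, q, r, s, t, hps, ht, .inr ⟨hY', hZ'⟩⟩

end NormalForm

theorem stmt15_general (g : Type*) [LieRing g] [LieAlgebra ℝ g]
    (X Y Z W : g)
    (hindep : LinearIndependent ℝ ![X, Y, Z, W])
    (hspan : Submodule.span ℝ {X, Y, Z, W} = ⊤)
    (hXY : ⁅X, Y⁆ = 0) (hXZ : ⁅X, Z⁆ = 0) (hYZ : ⁅Y, Z⁆ = -X)
    (hWY : ⁅W, Y⁆ ∈ Submodule.span ℝ ({X, Y, Z} : Set g))
    (hWZ : ⁅W, Z⁆ ∈ Submodule.span ℝ ({X, Y, Z} : Set g))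
    (hderived :
      (⁅(⊤ : LieIdeal ℝ g), (⊤ : LieIdeal ℝ g)⁆ : LieIdeal ℝ g).toSubmodule =
        Submodule.span ℝ ({X, Y, Z} : Set g))
    (hunimod : ∀ v : g, LinearMap.trace ℝ g (LieAlgebra.ad ℝ g v) = 0) :
    ∃ X' Y' Z' W' : g,
      LinearIndependent ℝ ![X', Y', Z', W'] ∧
      Submodule.span ℝ {X', Y', Z', W'} = ⊤ ∧
      ⁅X', Y'⁆ = 0 ∧ ⁅X', Z'⁆ = 0 ∧ ⁅Y', Z'⁆ = -X' ∧ ⁅W', X'⁆ = 0 ∧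
      ((⁅W', Y'⁆ = -Z' ∧ ⁅W', Z'⁆ = Y') ∨ (⁅W', Y'⁆ = Y' ∧ ⁅W', Z'⁆ = -Z')) := by
  obtain ⟨b₁, b₂, b₃, hWY⟩ := mem_span_triple.mp hWY
  obtain ⟨c₁, c₂, c₃, hWZ⟩ := mem_span_triple.mp hWZ
  have hWX := lie_eq_smul_of_heisenberg hXY hXZ hYZ hWY.symm hWZ.symm
  have htr : b₂ + c₃ = 0 := by
    have := trace_eq_of_linearIndependent_four hindep hspan (LieAlgebra.ad ℝ g W) hWX
      hWY.symm hWZ.symm (lie_self W)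
    linarith [hunimod W]
  rw [htr, zero_smul] at hWX
  have hdet := det_ne_zero_of_toSubmodule_lie_top_top_eq hindep hspan hXY hXZ hYZ hWX
    hWY.symm hWZ.symm hderived
  obtain ⟨hW₀X, hW₀Y, hW₀Z⟩ := lie_add_sub_eq_of_heisenberg hXY hXZ hYZ hWX hWY.symm hWZ.symm
  obtain ⟨p, q, r, s, t, hps, ht, hnormal⟩ :=
    exists_normal_basis_of_trace_eq_zero (LieAlgebra.ad ℝ g _) hW₀Y hW₀Z htr hdet
  have hspan' : span ℝ {(p * s - q * r) • X, p • Y + q • Z, r • Y + s • Z,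
      t • (W + (c₁ • Y - b₁ • Z))} = ⊤ := by
    rw [span_smul_pair_smul_add_eq hps ht (span_pair_eq_of_det_ne_zero hps)
      (mem_span_pair.mpr ⟨c₁, -b₁, by module⟩), hspan]
  obtain ⟨hXY', hXZ', hYZ'⟩ := heisenberg_change_of_basis hXY hXZ hYZ p q r s
  refine ⟨_, _, _, _, linearIndependent_of_span_range_eq_top hindep ?_ ?_, hspan',
    hXY', hXZ', hYZ', ?_, ?_⟩
  · rwa [Matrix.range_vecCons_four]
  · rwa [Matrix.range_vecCons_four]
  · rw [smul_lie, lie_smul, hW₀X, smul_zero, smul_zero]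
  · simpa only [smul_lie, LieAlgebra.ad_apply] using hnormal

/-- Let `g` be a 4-dimensional unimodular Lie algebra of the form `n ⋊ ℝ·W`,
where `n = span{X,Y,Z}` is the 3-dimensional Heisenberg algebra
(`[Y,Z] = -X`) and `n = [g,g]`.  Then, after a change of basis, the action of
the generator `W` satisfies either `ad_W X = 0, ad_W Y = -Z, ad_W Z = Y` or
`ad_W X = 0, ad_W Y = Y, ad_W Z = -Z`. -/
theorem stmt15 (g : Type*) [LieRing g] [LieAlgebra ℝ g] [Module.Finite ℝ g]
    (X Y Z W : g)
    (hindep : LinearIndependent ℝ ![X, Y, Z, W])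
    (hspan : Submodule.span ℝ {X, Y, Z, W} = ⊤)
    (hXY : ⁅X, Y⁆ = 0) (hXZ : ⁅X, Z⁆ = 0) (hYZ : ⁅Y, Z⁆ = -X)
    (hWX : ⁅W, X⁆ ∈ Submodule.span ℝ ({X, Y, Z} : Set g))
    (hWY : ⁅W, Y⁆ ∈ Submodule.span ℝ ({X, Y, Z} : Set g))
    (hWZ : ⁅W, Z⁆ ∈ Submodule.span ℝ ({X, Y, Z} : Set g))
    (hderived :
      (⁅(⊤ : LieIdeal ℝ g), (⊤ : LieIdeal ℝ g)⁆ : LieIdeal ℝ g).toSubmodule =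
        Submodule.span ℝ ({X, Y, Z} : Set g))
    (hunimod : ∀ v : g, LinearMap.trace ℝ g (LieAlgebra.ad ℝ g v) = 0) :
    ∃ X' Y' Z' W' : g,
      LinearIndependent ℝ ![X', Y', Z', W'] ∧
      Submodule.span ℝ {X', Y', Z', W'} = ⊤ ∧
      ⁅X', Y'⁆ = 0 ∧ ⁅X', Z'⁆ = 0 ∧ ⁅Y', Z'⁆ = -X' ∧ ⁅W', X'⁆ = 0 ∧
      ((⁅W', Y'⁆ = -Z' ∧ ⁅W', Z'⁆ = Y') ∨ (⁅W', Y'⁆ = Y' ∧ ⁅W', Z'⁆ = -Z')) :=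
  stmt15_general g X Y Z W hindep hspan hXY hXZ hYZ hWY hWZ hderived hunimod
end

section
/- Let g be a Lie algebra with a positive-definite inner product h and let A ∈ g be such that ad_A is skew-symmetric with respect to h (A is a 'Killing element'). If g is nilpotent, then A is central: [A, X] = 0 for all X ∈ g. -/
/-! If `ad A` is nonzero and nilpotent, some `Y = [A, X₀] ≠ 0` satisfies `[A, Y] = 0` (take `Y` in the
last nonzero image of the iterates of `ad A`). Skew-symmetry at `(X₀, Y)` then gives `h(Y, Y) = 0`,
contradicting positivity. -/

namespace Module.End

variable {R M : Type*} [CommRing R] [AddCommGroup M] [Module R M]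

theorem exists_apply_ne_zero_apply_apply_eq_zero_of_pow_apply_eq_zero {f : Module.End R M}
    {n : ℕ} {x : M} (hn : (f ^ n) x = 0) (hx : f x ≠ 0) : ∃ z, f z ≠ 0 ∧ f (f z) = 0 := by
  induction n generalizing x with
  | zero => simp_all
  | succ n ih =>
    by_cases hfx : f (f x) = 0
    · exact ⟨x, hx, hfx⟩
    · exact ih (by rwa [pow_succ, Module.End.mul_apply] at hn) hfx

theorem exists_apply_ne_zero_apply_apply_eq_zero {f : Module.End R M} (hf : IsNilpotent f)
    (hf₀ : f ≠ 0) : ∃ z, f z ≠ 0 ∧ f (f z) = 0 := by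
  obtain ⟨n, hn⟩ := hf
  obtain ⟨x, hx⟩ := DFunLike.ne_iff.mp hf₀
  exact exists_apply_ne_zero_apply_apply_eq_zero_of_pow_apply_eq_zero
    (by rw [hn, LinearMap.zero_apply]) hx

theorem eq_zero_of_isNilpotent_of_skew {f : Module.End R M} (hf : IsNilpotent f)
    {h : M →ₗ[R] M →ₗ[R] R} (hh : ∀ x, h x x = 0 → x = 0)
    (hskew : ∀ x y, h (f x) y + h x (f y) = 0) : f = 0 := by
  by_contra hf₀
  obtain ⟨z, hfz, hffz⟩ := exists_apply_ne_zero_apply_apply_eq_zero hf hf₀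
  have := hskew z (f z)
  rw [hffz, map_zero, add_zero] at this
  exact hfz (hh _ this)

end Module.End

theorem stmt17_general (g : Type*) [LieRing g] [LieAlgebra ℝ g]
    [LieRing.IsNilpotent g]
    (h : g →ₗ[ℝ] g →ₗ[ℝ] ℝ)
    (hpos : ∀ X : g, X ≠ 0 → 0 < h X X)
    (A : g)
    (hskew : ∀ X Y : g, h ⁅A, X⁆ Y + h X ⁅A, Y⁆ = 0) :
    ∀ X : g, ⁅A, X⁆ = 0 := by
  have had : LieModule.toEnd ℝ g g A = 0 :=
    Module.End.eq_zero_of_isNilpotent_of_skew (LieModule.isNilpotent_toEnd_of_isNilpotent ℝ g g A)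
      (fun X hX ↦ by_contra fun hX₀ ↦ (hpos X hX₀).ne' hX) hskew
  exact fun X ↦ LinearMap.congr_fun had X

/-- Let `g` be a nilpotent Lie algebra with a positive-definite inner product
`h`, and let `A ∈ g` be such that `ad_A` is skew-symmetric with respect to `h`
(a "Killing element"): `h([A,X],Y) + h(X,[A,Y]) = 0` for all `X, Y`.  Then `A`
is central: `[A,X] = 0` for all `X ∈ g`. -/
theorem stmt17 (g : Type*) [LieRing g] [LieAlgebra ℝ g]
    [LieRing.IsNilpotent g]
    (h : g →ₗ[ℝ] g →ₗ[ℝ] ℝ)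
    (hsymm : ∀ X Y : g, h X Y = h Y X)
    (hpos : ∀ X : g, X ≠ 0 → 0 < h X X)
    (A : g)
    (hskew : ∀ X Y : g, h ⁅A, X⁆ Y + h X ⁅A, Y⁆ = 0) :
    ∀ X : g, ⁅A, X⁆ = 0 :=
  stmt17_general g h hpos A hskew
end

section
/- Let g = ℝT ⊕ su(2) = u(2) with T central and [X,Y]=Z, [Y,Z]=X, [Z,X]=Y. Then the 1-form θ = t* (dual to T) is closed and non-exact, and there is a 2-form Ω and complex structure J making (g, J, Ω, θ) an l.c.K. Lie algebra; explicitly with J T = X, J X = -T, J Y = Z, J Z = -Y (the case c = 1, d = 0), Ω(U,V) = h(JU,V) for the inner product making T,X,Y,Z orthonormal satisfies dΩ = θ ∧ Ω. -/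
/-- The complex structure `J T = X`, `J X = -T`, `J Y = Z`, `J Z = -Y`
(the case `c = 1`, `d = 0`). -/
def u2J0 (u : Fin 4 → ℝ) : Fin 4 → ℝ :=
  ![-(u 1), u 0, -(u 3), u 2]

/-- The 1-form `θ = t*` dual to the central element `T`. -/
def u2Theta (u : Fin 4 → ℝ) : ℝ := u 0

/-- The 2-form `Ω(U,V) = h(JU,V)` for the inner product `h` making
`T, X, Y, Z` orthonormal. -/
def u2Omega (u v : Fin 4 → ℝ) : ℝ :=
  -(u 1) * v 0 + u 0 * v 1 + -(u 3) * v 2 + u 2 * v 3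

/-- On `u(2)` the 1-form `θ = t*` is closed and non-exact (i.e. nonzero), and
`(J, Ω, θ)` is an l.c.K. structure: `J² = -id`, the Nijenhuis tensor of `J`
vanishes, `Ω` is `J`-invariant, the metric `h(U,V) = Ω(JU,V) (= ⟨U,V⟩)` is
positive definite, and `dΩ = θ ∧ Ω` for the Chevalley–Eilenberg differential. -/
theorem stmt19 :
    (∀ u v : Fin 4 → ℝ, u2Theta (u2Br u v) = 0) ∧
    u2Theta ≠ 0 ∧
    (∀ u : Fin 4 → ℝ, u2J0 (u2J0 u) = -u) ∧
    (∀ u v : Fin 4 → ℝ,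
      u2Br (u2J0 u) (u2J0 v) - u2Br u v - u2J0 (u2Br (u2J0 u) v) -
        u2J0 (u2Br u (u2J0 v)) = 0) ∧
    (∀ u v : Fin 4 → ℝ, u2Omega (u2J0 u) (u2J0 v) = u2Omega u v) ∧
    (∀ u : Fin 4 → ℝ, u ≠ 0 → 0 < u2Omega u (u2J0 u)) ∧
    (∀ u v t : Fin 4 → ℝ,
      -u2Omega (u2Br u v) t + u2Omega (u2Br u t) v - u2Omega (u2Br v t) u =
        u2Theta u * u2Omega v t - u2Theta v * u2Omega u t + u2Theta t * u2Omega u v) := by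
  refine ⟨fun u v => rfl, ?_, ?_, ?_, ?_, ?_, ?_⟩
  · intro h
    have := congrFun h ![1,0,0,0]
    simp [u2Theta] at this
  · intro u
    funext i
    fin_cases i <;> simp [u2J0]
  · intro u v
    funext i
    fin_cases i <;> simp [u2Br, u2J0] <;> ring
  · intro u v
    simp [u2Omega, u2J0]; ring
  · intro u hu
    have h : u2Omega u (u2J0 u) = u 0 ^2 + u 1 ^2 + u 2 ^2 + u 3 ^2 := by
      simp [u2Omega, u2J0]; ring
    rw [h]
    rcases (by
      by_contra hc
      push_neg at hc
      apply hu; funext i; fin_cases i <;> simp <;> nlinarith [hc 0, hc 1, hc 2, hc 3, sq_nonneg (u 0), sq_nonneg (u 1), sq_nonneg (u 2), sq_nonneg (u 3)] : ∃ i : Fin 4, u i ≠ 0) with ⟨i, hi⟩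
    fin_cases i <;> positivity
  · intro u v t
    simp [u2Omega, u2Br, u2Theta]; ring
end
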